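/- arXiv:1704.01671 — 4 statements merged into one kernel-verified Lean document; each statement's English description precedes it below -/
import Mathlib

section
/- There exists a matrix P ∈ GL(5, ℤ) such that Pᵀ M' P equals the block-diagonal matrix U ⊕ A1(-1) ⊕ A2(-1); that is, the lattice (ℤ⁵, M') is isometric to U ⊕ A1 ⊕ A2. In particular det M' = 6 and the cokernel ℤ⁵ / M'·ℤ⁵ is cyclic of order 6. -/
open Matrix

def M' : Matrix (Fin 5) (Fin 5) ℤ :=
  !![-2, 1, 2, 0, 0;
    1, -2, 0, 1, 0;
    2, 0, -2, 0, 0;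
    0, 1, 0, -2, 1;
    0, 0, 0, 1, -2]

def B : Matrix (Fin 5) (Fin 5) ℤ :=
  !![0, 1, 0, 0, 0;
    1, 0, 0, 0, 0;
    0, 0, -2, 0, 0;
    0, 0, 0, -2, 1;
    0, 0, 0, 1, -2]

/-!
The change of basis `basisChange` below carries `M'` to `B = U ⊕ A₁(-1) ⊕ A₂(-1)` and has
determinant `-1`, so taking determinants gives `det M' = det B = 6`.

For the cokernel, `w = (2, 0, 5, 4, 2)` satisfies `wᵀ M' = 6 (1, 1, -1, -1, 0)`, so `x ↦ w ⬝ x mod 6`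
kills the image of `M'`; conversely every `x` with `w ⬝ x ≡ 0 mod 6` has an explicit integral
preimage under `M'`. Since `w ⬝ (e₂ - e₃) = 1` this map is onto `ZMod 6`, and the first isomorphism
theorem identifies the cokernel.
-/

def basisChange : Matrix (Fin 5) (Fin 5) ℤ :=
  !![1, 1, 0, -1, 0;
    0, 1, 0, 0, 0;
    1, 1, -1, -1, 0;
    0, 0, 0, 1, 0;
    0, 0, 0, 0, 1]

theorem det_basisChange : basisChange.det = -1 := by
  simp [basisChange, det_succ_row_zero, Fin.sum_univ_succ, Fin.succAbove]

theorem basisChange_transpose_mul_M'_mul_basisChange :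
    basisChangeᵀ * M' * basisChange = B := by
  decide

theorem det_B : B.det = 6 := by
  simp [B, det_succ_row_zero, Fin.sum_univ_succ, Fin.succAbove]

theorem det_M' : M'.det = 6 := by
  have h := congrArg det basisChange_transpose_mul_M'_mul_basisChange
  rw [det_mul, det_mul, det_transpose, det_basisChange, det_B] at h
  linarith

def cokernelWeight : Fin 5 → ℤ := ![2, 0, 5, 4, 2]

theorem cokernelWeight_vecMul_M' : cokernelWeight ᵥ* M' = 6 • ![1, 1, -1, -1, 0] := by
  decide

def cokernelChar : (Fin 5 → ℤ) →ₗ[ℤ] ZMod 6 :=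
  (Int.castAddHom (ZMod 6)).toIntLinearMap ∘ₗ dotProductBilin ℤ ℤ cokernelWeight

theorem cokernelChar_apply (x : Fin 5 → ℤ) :
    cokernelChar x = ((cokernelWeight ⬝ᵥ x : ℤ) : ZMod 6) :=
  rfl

theorem cokernelChar_surjective : Function.Surjective cokernelChar := by
  intro z
  obtain ⟨n, rfl⟩ := ZMod.intCast_surjective z
  refine ⟨n • ![0, 0, 1, -1, 0], ?_⟩
  rw [cokernelChar_apply, dotProduct_smul]
  simp [cokernelWeight, dotProduct, Fin.sum_univ_five]

theorem exists_M'_mulVec_eq_of_dotProduct_eq (x : Fin 5 → ℤ) (k : ℤ)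
    (hk : cokernelWeight ⬝ᵥ x = 6 * k) : ∃ y, M' *ᵥ y = x := by
  refine ⟨![4 * k + x 1 - 2 * x 2 - 2 * x 3 - x 4, x 0 + x 2, k + x 0 + x 1,
    2 * k - x 2 - 2 * x 3 - x 4, 4 * k - x 0 - 3 * x 2 - 3 * x 3 - 2 * x 4], ?_⟩
  simp [cokernelWeight, dotProduct, Fin.sum_univ_five] at hk
  ext i
  fin_cases i <;> simp [M', mulVec, dotProduct, Fin.sum_univ_five] <;> linarith

theorem range_toLin'_M' : LinearMap.range (toLin' M') = LinearMap.ker cokernelChar := by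
  ext x
  rw [LinearMap.mem_ker, cokernelChar_apply, ZMod.intCast_zmod_eq_zero_iff_dvd]
  constructor
  · rintro ⟨y, rfl⟩
    rw [toLin'_apply, dotProduct_mulVec, cokernelWeight_vecMul_M', smul_dotProduct]
    exact dvd_mul_right _ _
  · rintro ⟨k, hk⟩
    exact exists_M'_mulVec_eq_of_dotProduct_eq x k hk

theorem stmt_11 :
    (∃ P : Matrix (Fin 5) (Fin 5) ℤ,
      (P.det = 1 ∨ P.det = -1) ∧ Pᵀ * M' * P = B) ∧ Matrix.det M' = 6 ∧
    Nonempty (((Fin 5 → ℤ) ⧸ LinearMap.range (Matrix.toLin' M')) ≃+ ZMod 6) :=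
  ⟨⟨basisChange, Or.inr det_basisChange, basisChange_transpose_mul_M'_mul_basisChange⟩, det_M',
    ⟨((Submodule.quotEquivOfEq _ _ range_toLin'_M').trans
      (cokernelChar.quotKerEquivOfSurjective cokernelChar_surjective)).toAddEquiv⟩⟩
end

section
/- The determinant of M equals 6, and the cokernel ℤ¹⁵ / M·ℤ¹⁵ of the linear map ℤ¹⁵ → ℤ¹⁵ given by M is isomorphic as an abelian group to ℤ/6ℤ. In particular the discriminant group of the lattice (ℤ¹⁵, M) is cyclic. -/
open Matrix

def M : Matrix (Fin 15) (Fin 15) ℤ :=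
  !![-2, 0, 0, 0, 0, 0, 1, 0, 1, 1, 0, 0, 0, 0, 0;
    0, -2, 0, 1, 0, 1, 0, 0, 0, 0, 0, 0, 0, 0, 1;
    0, 0, -2, 1, 1, 0, 0, 0, 0, 0, 0, 0, 0, 0, 0;
    0, 1, 1, -2, 0, 0, 0, 0, 0, 0, 0, 0, 0, 0, 0;
    0, 0, 1, 0, -2, 0, 0, 0, 0, 0, 0, 0, 0, 0, 0;
    0, 1, 0, 0, 0, -2, 0, 0, 0, 0, 0, 0, 0, 0, 0;
    1, 0, 0, 0, 0, 0, -2, 0, 0, 0, 0, 0, 0, 0, 0;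
    0, 0, 0, 0, 0, 0, 0, -2, 1, 0, 0, 0, 0, 0, 0;
    1, 0, 0, 0, 0, 0, 0, 1, -2, 0, 0, 0, 0, 0, 0;
    1, 0, 0, 0, 0, 0, 0, 0, 0, -2, 1, 0, 0, 0, 0;
    0, 0, 0, 0, 0, 0, 0, 0, 0, 1, -2, 1, 0, 0, 0;
    0, 0, 0, 0, 0, 0, 0, 0, 0, 0, 1, -2, 1, 0, 0;
    0, 0, 0, 0, 0, 0, 0, 0, 0, 0, 0, 1, -2, 1, 0;
    0, 0, 0, 0, 0, 0, 0, 0, 0, 0, 0, 0, 1, -2, 1;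
    0, 1, 0, 0, 0, 0, 0, 0, 0, 0, 0, 0, 0, 1, -2]

/-!
Symmetric Gaussian elimination writes `M = U D Uᵀ` over `ℚ` with `U` unipotent upper triangular
and `D` diagonal, so `det M` is the product of the pivots, which is `6`. Since `det M ≠ 0`, the
cokernel of `M` is finite of order `|det M| = 6`, and an abelian group of squarefree order is
cyclic.
-/

theorem Matrix.natCard_quotient_range_toLin' {n : Type*} [Fintype n] [DecidableEq n]
    (A : Matrix n n ℤ) (hA : A.det ≠ 0) :
    Nat.card ((n → ℤ) ⧸ LinearMap.range A.toLin') = A.det.natAbs := by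
  have hinj : Function.Injective A.toLin' := by
    rw [← LinearMap.ker_eq_bot, LinearMap.ker_eq_bot']
    intro v hv
    by_contra hv0
    exact hA (exists_mulVec_eq_zero_iff.mp ⟨v, hv0, hv⟩)
  rw [← Submodule.natAbs_det_equiv _ (LinearEquiv.ofInjective _ hinj), ← LinearMap.det_toLin' A]
  rfl

theorem isAddCyclic_of_squarefree_natCard {G : Type*} [AddCommGroup G] [Finite G]
    (hG : Squarefree (Nat.card G)) : IsAddCyclic G := by
  have : IsZGroup (Multiplicative G) :=
    IsZGroup.of_squarefree (by rwa [Nat.card_congr Multiplicative.toAdd])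
  exact isCyclic_multiplicative_iff.mp inferInstance

theorem nonempty_addEquiv_zmod_of_natCard_eq {G : Type*} [AddCommGroup G] {n : ℕ}
    (hG : Nat.card G = n) (hn : Squarefree n) : Nonempty (G ≃+ ZMod n) := by
  have : Finite G := Nat.finite_of_card_ne_zero (hG ▸ hn.ne_zero)
  have : IsAddCyclic G := isAddCyclic_of_squarefree_natCard (hG ▸ hn)
  exact ⟨addEquivOfAddCyclicCardEq (by rw [hG, Nat.card_zmod])⟩

namespace Q17

-- The indices are eliminated from the last one down, which makes this factor upper
-- triangular; `pivots k` is the Schur complement of the block of indices `> k` at `(k, k)`.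
def unipotentFactor : Matrix (Fin 15) (Fin 15) ℚ :=
  !![1, 4/3, 0, 0, 0, 0, -1/2, -1/3, -1/2, -6/7, 0, 0, 0, 0, 0;
    0, 1, -1/2, -1/2, 0, -1/2, 0, 0, 0, -1/7, -1/6, -1/5, -1/4, -1/3, -1/2;
    0, 0, 1, -1/2, -1/2, 0, 0, 0, 0, 0, 0, 0, 0, 0, 0;
    0, 0, 0, 1, 0, 0, 0, 0, 0, 0, 0, 0, 0, 0, 0;
    0, 0, 0, 0, 1, 0, 0, 0, 0, 0, 0, 0, 0, 0, 0;
    0, 0, 0, 0, 0, 1, 0, 0, 0, 0, 0, 0, 0, 0, 0;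
    0, 0, 0, 0, 0, 0, 1, 0, 0, 0, 0, 0, 0, 0, 0;
    0, 0, 0, 0, 0, 0, 0, 1, -1/2, 0, 0, 0, 0, 0, 0;
    0, 0, 0, 0, 0, 0, 0, 0, 1, 0, 0, 0, 0, 0, 0;
    0, 0, 0, 0, 0, 0, 0, 0, 0, 1, -5/6, 0, 0, 0, 0;
    0, 0, 0, 0, 0, 0, 0, 0, 0, 0, 1, -4/5, 0, 0, 0;
    0, 0, 0, 0, 0, 0, 0, 0, 0, 0, 0, 1, -3/4, 0, 0;
    0, 0, 0, 0, 0, 0, 0, 0, 0, 0, 0, 0, 1, -2/3, 0;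
    0, 0, 0, 0, 0, 0, 0, 0, 0, 0, 0, 0, 0, 1, -1/2;
    0, 0, 0, 0, 0, 0, 0, 0, 0, 0, 0, 0, 0, 0, 1]

def pivots : Fin 15 → ℚ :=
  ![-1/6, 3/28, -1, -2, -2, -2, -2, -3/2, -2, -7/6, -6/5, -5/4, -4/3, -3/2, -2]

theorem map_intCast_M :
    M.map (Int.cast : ℤ → ℚ) = unipotentFactor * diagonal pivots * unipotentFactorᵀ := by
  decide +kernel

theorem isUpperTriangular_unipotentFactor : unipotentFactor.IsUpperTriangular := by
  decide +kernel

theorem det_M : M.det = 6 := by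
  have h : ((M.det : ℤ) : ℚ) = 6 :=
    calc ((M.det : ℤ) : ℚ) = (M.map (Int.cast : ℤ → ℚ)).det :=
          (Int.castRingHom ℚ).map_det M
      _ = (∏ i, unipotentFactor i i) ^ 2 * ∏ i, pivots i := by
        rw [map_intCast_M, det_mul, det_mul, det_transpose, det_diagonal,
          det_of_isUpperTriangular isUpperTriangular_unipotentFactor]
        ring
      _ = 6 := by decide +kernel
  exact_mod_cast h

end Q17

theorem stmt_12 :
    M.det = 6 ∧
    Nonempty (((Fin 15 → ℤ) ⧸ LinearMap.range (Matrix.toLin' M)) ≃+ ZMod 6) := by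
  refine ⟨Q17.det_M, nonempty_addEquiv_zmod_of_natCard_eq ?_ (by decide +kernel)⟩
  rw [natCard_quotient_range_toLin' M (by rw [Q17.det_M]; decide), Q17.det_M]
  rfl
end

section
/- There exists a primitive embedding of the lattice (ℤ¹⁵, M) into the K3 lattice: an injective ℤ-linear map ι : ℤ¹⁵ → ℤ²² with (ι x)ᵀ G (ι y) = xᵀ M y for all x, y ∈ ℤ¹⁵, such that ℤ²² / ι(ℤ¹⁵) is torsion-free. -/
open Matrix

def GK3 : Matrix (Fin 22) (Fin 22) ℤ :=
  !![0, 1, 0, 0, 0, 0, 0, 0, 0, 0, 0, 0, 0, 0, 0, 0, 0, 0, 0, 0, 0, 0;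
    1, 0, 0, 0, 0, 0, 0, 0, 0, 0, 0, 0, 0, 0, 0, 0, 0, 0, 0, 0, 0, 0;
    0, 0, 0, 1, 0, 0, 0, 0, 0, 0, 0, 0, 0, 0, 0, 0, 0, 0, 0, 0, 0, 0;
    0, 0, 1, 0, 0, 0, 0, 0, 0, 0, 0, 0, 0, 0, 0, 0, 0, 0, 0, 0, 0, 0;
    0, 0, 0, 0, 0, 1, 0, 0, 0, 0, 0, 0, 0, 0, 0, 0, 0, 0, 0, 0, 0, 0;
    0, 0, 0, 0, 1, 0, 0, 0, 0, 0, 0, 0, 0, 0, 0, 0, 0, 0, 0, 0, 0, 0;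
    0, 0, 0, 0, 0, 0, -2, 0, 1, 0, 0, 0, 0, 0, 0, 0, 0, 0, 0, 0, 0, 0;
    0, 0, 0, 0, 0, 0, 0, -2, 0, 1, 0, 0, 0, 0, 0, 0, 0, 0, 0, 0, 0, 0;
    0, 0, 0, 0, 0, 0, 1, 0, -2, 1, 0, 0, 0, 0, 0, 0, 0, 0, 0, 0, 0, 0;
    0, 0, 0, 0, 0, 0, 0, 1, 1, -2, 1, 0, 0, 0, 0, 0, 0, 0, 0, 0, 0, 0;
    0, 0, 0, 0, 0, 0, 0, 0, 0, 1, -2, 1, 0, 0, 0, 0, 0, 0, 0, 0, 0, 0;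
    0, 0, 0, 0, 0, 0, 0, 0, 0, 0, 1, -2, 1, 0, 0, 0, 0, 0, 0, 0, 0, 0;
    0, 0, 0, 0, 0, 0, 0, 0, 0, 0, 0, 1, -2, 1, 0, 0, 0, 0, 0, 0, 0, 0;
    0, 0, 0, 0, 0, 0, 0, 0, 0, 0, 0, 0, 1, -2, 0, 0, 0, 0, 0, 0, 0, 0;
    0, 0, 0, 0, 0, 0, 0, 0, 0, 0, 0, 0, 0, 0, -2, 0, 1, 0, 0, 0, 0, 0;
    0, 0, 0, 0, 0, 0, 0, 0, 0, 0, 0, 0, 0, 0, 0, -2, 0, 1, 0, 0, 0, 0;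
    0, 0, 0, 0, 0, 0, 0, 0, 0, 0, 0, 0, 0, 0, 1, 0, -2, 1, 0, 0, 0, 0;
    0, 0, 0, 0, 0, 0, 0, 0, 0, 0, 0, 0, 0, 0, 0, 1, 1, -2, 1, 0, 0, 0;
    0, 0, 0, 0, 0, 0, 0, 0, 0, 0, 0, 0, 0, 0, 0, 0, 0, 1, -2, 1, 0, 0;
    0, 0, 0, 0, 0, 0, 0, 0, 0, 0, 0, 0, 0, 0, 0, 0, 0, 0, 1, -2, 1, 0;
    0, 0, 0, 0, 0, 0, 0, 0, 0, 0, 0, 0, 0, 0, 0, 0, 0, 0, 0, 1, -2, 1;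
    0, 0, 0, 0, 0, 0, 0, 0, 0, 0, 0, 0, 0, 0, 0, 0, 0, 0, 0, 0, 1, -2]


def Amat : Matrix (Fin 22) (Fin 15) ℤ :=
  !![0, 0, 0, 0, 0, 0, 0, 0, 0, 0, 0, 0, 0, 7, 0;
    0, 0, 0, 0, 0, 0, 0, 0, 0, 0, 0, 0, 0, 1, 0;
    0, 0, 0, 0, 0, 0, 0, 0, 0, 0, 0, 0, 0, 0, 0;
    0, 0, 0, 0, 0, 0, 0, 0, 0, 0, 0, 0, 0, 0, 0;
    0, 0, 0, 0, 0, 0, 0, 0, 0, 0, 0, 0, 0, 0, 0;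
    0, 0, 0, 0, 0, 0, 0, 0, 0, 0, 0, 0, 0, 0, 0;
    0, 0, 0, 0, 0, 0, 0, 1, 0, 0, 0, 0, 0, -2, 0;
    0, 0, 0, 0, 0, 0, 1, 0, 0, 0, 0, 0, 0, -3, 0;
    0, 0, 0, 0, 0, 0, 0, 0, 1, 0, 0, 0, 0, -4, 0;
    1, 0, 0, 0, 0, 0, 0, 0, 0, 0, 0, 0, 0, -6, 0;
    0, 0, 0, 0, 0, 0, 0, 0, 0, 1, 0, 0, 0, -5, 0;
    0, 0, 0, 0, 0, 0, 0, 0, 0, 0, 1, 0, 0, -4, 0;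
    0, 0, 0, 0, 0, 0, 0, 0, 0, 0, 0, 1, 0, -3, 0;
    0, 0, 0, 0, 0, 0, 0, 0, 0, 0, 0, 0, 1, -2, 0;
    0, 0, 0, 0, 0, 0, 0, 0, 0, 0, 0, 0, 0, -7, 0;
    0, 0, 0, 0, 0, 1, 0, 0, 0, 0, 0, 0, 0, -10, 0;
    0, 0, 0, 0, 0, 0, 0, 0, 0, 0, 0, 0, 0, -14, 1;
    0, 1, 0, 0, 0, 0, 0, 0, 0, 0, 0, 0, 0, -20, 0;
    0, 0, 0, 1, 0, 0, 0, 0, 0, 0, 0, 0, 0, -16, 0;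
    0, 0, 1, 0, 0, 0, 0, 0, 0, 0, 0, 0, 0, -12, 0;
    0, 0, 0, 0, 1, 0, 0, 0, 0, 0, 0, 0, 0, -8, 0;
    0, 0, 0, 0, 0, 0, 0, 0, 0, 0, 0, 0, 0, -4, 0]

def Bmat : Matrix (Fin 15) (Fin 22) ℤ :=
  !![0, 6, 0, 0, 0, 0, 0, 0, 0, 1, 0, 0, 0, 0, 0, 0, 0, 0, 0, 0, 0, 0;
    0, 20, 0, 0, 0, 0, 0, 0, 0, 0, 0, 0, 0, 0, 0, 0, 0, 1, 0, 0, 0, 0;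
    0, 12, 0, 0, 0, 0, 0, 0, 0, 0, 0, 0, 0, 0, 0, 0, 0, 0, 0, 1, 0, 0;
    0, 16, 0, 0, 0, 0, 0, 0, 0, 0, 0, 0, 0, 0, 0, 0, 0, 0, 1, 0, 0, 0;
    0, 8, 0, 0, 0, 0, 0, 0, 0, 0, 0, 0, 0, 0, 0, 0, 0, 0, 0, 0, 1, 0;
    0, 10, 0, 0, 0, 0, 0, 0, 0, 0, 0, 0, 0, 0, 0, 1, 0, 0, 0, 0, 0, 0;
    0, 3, 0, 0, 0, 0, 0, 1, 0, 0, 0, 0, 0, 0, 0, 0, 0, 0, 0, 0, 0, 0;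
    0, 2, 0, 0, 0, 0, 1, 0, 0, 0, 0, 0, 0, 0, 0, 0, 0, 0, 0, 0, 0, 0;
    0, 4, 0, 0, 0, 0, 0, 0, 1, 0, 0, 0, 0, 0, 0, 0, 0, 0, 0, 0, 0, 0;
    0, 5, 0, 0, 0, 0, 0, 0, 0, 0, 1, 0, 0, 0, 0, 0, 0, 0, 0, 0, 0, 0;
    0, 4, 0, 0, 0, 0, 0, 0, 0, 0, 0, 1, 0, 0, 0, 0, 0, 0, 0, 0, 0, 0;
    0, 3, 0, 0, 0, 0, 0, 0, 0, 0, 0, 0, 1, 0, 0, 0, 0, 0, 0, 0, 0, 0;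
    0, 2, 0, 0, 0, 0, 0, 0, 0, 0, 0, 0, 0, 1, 0, 0, 0, 0, 0, 0, 0, 0;
    0, 1, 0, 0, 0, 0, 0, 0, 0, 0, 0, 0, 0, 0, 0, 0, 0, 0, 0, 0, 0, 0;
    0, 14, 0, 0, 0, 0, 0, 0, 0, 0, 0, 0, 0, 0, 0, 0, 1, 0, 0, 0, 0, 0]

set_option maxRecDepth 100000 in
lemma hBA : Bmat * Amat = 1 := by decide

set_option maxRecDepth 100000 in
set_option maxHeartbeats 4000000 in
lemma hGram : Amatᵀ * (GK3 * Amat) = M := by decide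

theorem stmt_13 :
    ∃ ι : (Fin 15 → ℤ) →ₗ[ℤ] (Fin 22 → ℤ),
      Function.Injective ι ∧
      (∀ x y : Fin 15 → ℤ, ι x ⬝ᵥ (GK3 *ᵥ ι y) = x ⬝ᵥ (M *ᵥ y)) ∧
      (∀ (v : Fin 22 → ℤ) (k : ℤ), k ≠ 0 → k • v ∈ LinearMap.range ι → v ∈ LinearMap.range ι) := by
  refine ⟨Amat.mulVecLin, ?_, ?_, ?_⟩
  · intro x y h
    have h' : Bmat *ᵥ (Amat *ᵥ x) = Bmat *ᵥ (Amat *ᵥ y) := by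
      simpa [Matrix.mulVecLin_apply] using congrArg (Bmat.mulVec) h
    simpa [Matrix.mulVec_mulVec, hBA, Matrix.one_mulVec] using h'
  · intro x y
    have h1 : Amat *ᵥ x ⬝ᵥ (GK3 *ᵥ (Amat *ᵥ y)) = x ⬝ᵥ (M *ᵥ y) := by
      rw [Matrix.mulVec_mulVec, ← Matrix.vecMul_transpose,
        Matrix.dotProduct_mulVec, Matrix.vecMul_vecMul, hGram,
        Matrix.dotProduct_mulVec x M y]
    simpa [Matrix.mulVecLin_apply] using h1
  · rintro v k hk ⟨x, hx⟩
    have hx' : Amat *ᵥ x = k • v := by simpa [Matrix.mulVecLin_apply] using hx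
    refine ⟨Bmat *ᵥ v, ?_⟩
    have h1 : Bmat *ᵥ (Amat *ᵥ x) = x := by
      simp [Matrix.mulVec_mulVec, hBA, Matrix.one_mulVec]
    have h2 : k • (Bmat *ᵥ v) = x := by
      rw [← h1, hx', Matrix.mulVec_smul]
    have h3 : k • (Amat *ᵥ (Bmat *ᵥ v)) = k • v := by
      rw [← Matrix.mulVec_smul, h2, hx']
    have h4 : Amat *ᵥ (Bmat *ᵥ v) = v :=
      smul_right_injective (Fin 22 → ℤ) hk h3
    simpa [Matrix.mulVecLin_apply] using h4
end

section
/- There exists a primitive embedding ι : ℤ¹⁵ → ℤ²² of (ℤ¹⁵, M) into the K3 lattice together with an injective ℤ-linear map j : ℤ⁷ → ℤ²² whose image equals the orthogonal complement {v ∈ ℤ²² | vᵀ G (ι x) = 0 for all x ∈ ℤ¹⁵} and which satisfies (j a)ᵀ G (j b) = aᵀ (U ⊕ M') b for all a, b ∈ ℤ⁷, where U ⊕ M' is the 7×7 block-diagonal matrix built from U and M'. (Lattice duality for the transpose-dual pair (Q_{17}, Z_{2,0}): the orthogonal complement of Pic_Δ in the K3 lattice is isometric to U ⊕ Pic_{Δ'}.)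 -/
open Matrix

def UM' : Matrix (Fin 7) (Fin 7) ℤ :=
  !![0, 1, 0, 0, 0, 0, 0;
    1, 0, 0, 0, 0, 0, 0;
    0, 0, -2, 1, 2, 0, 0;
    0, 0, 1, -2, 0, 1, 0;
    0, 0, 2, 0, -2, 0, 0;
    0, 0, 0, 1, 0, -2, 1;
    0, 0, 0, 0, 0, 1, -2]

def Aemb : Matrix (Fin 22) (Fin 15) ℤ :=
  !![0, 1, 0, 0, 0, 0, 0, 0, 0, 0, 0, 0, 0, 1, -1;
    0, 0, 0, 0, 0, 0, 0, 0, 0, 0, 0, 0, 0, 0, 1;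
    0, 0, 0, 0, 0, 0, 0, 0, 0, 0, 0, 0, 0, 0, 0;
    0, 0, 0, 0, 0, 0, 0, 0, 0, 0, 0, 0, 0, 0, 0;
    0, 0, 0, 0, 0, 0, 0, 0, 0, 0, 0, 0, 0, 0, 0;
    0, 0, 0, 0, 0, 0, 0, 0, 0, 0, 0, 0, 0, 0, 0;
    0, 0, 0, 0, 0, 0, 0, 1, 0, 0, 0, 0, 0, -2, 0;
    0, 0, 0, 0, 0, 0, 1, 0, 0, 0, 0, 0, 0, -3, 0;
    0, 0, 0, 0, 0, 0, 0, 0, 1, 0, 0, 0, 0, -4, 0;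
    1, 0, 0, 0, 0, 0, 0, 0, 0, 0, 0, 0, 0, -6, 0;
    0, 0, 0, 0, 0, 0, 0, 0, 0, 1, 0, 0, 0, -5, 0;
    0, 0, 0, 0, 0, 0, 0, 0, 0, 0, 1, 0, 0, -4, 0;
    0, 0, 0, 0, 0, 0, 0, 0, 0, 0, 0, 1, 0, -3, 0;
    0, 0, 0, 0, 0, 0, 0, 0, 0, 0, 0, 0, 1, -2, 0;
    0, 1, 0, 0, 0, 1, 0, 0, 0, 0, 0, 0, 0, 0, 0;
    0, 2, 0, 0, 0, 0, 0, 0, 0, 0, 0, 0, 0, 0, 0;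
    0, 3, 0, 0, 0, 0, 0, 0, 0, 0, 0, 0, 0, 0, 0;
    0, 4, 0, 0, 0, 0, 0, 0, 0, 0, 0, 0, 0, 0, 0;
    0, 3, 0, 0, 0, 0, 0, 0, 0, 0, 0, 0, 0, 0, 0;
    0, 2, 0, 0, 1, 0, 0, 0, 0, 0, 0, 0, 0, 0, 0;
    0, 1, 1, 0, 0, 0, 0, 0, 0, 0, 0, 0, 0, 0, 0;
    0, 0, 0, 1, 0, 0, 0, 0, 0, 0, 0, 0, 0, 0, 0]
def Bemb : Matrix (Fin 22) (Fin 7) ℤ :=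
  !![0, 0, 0, 0, 0, 0, 0;
    0, 0, 0, 0, 0, 0, 0;
    -1, -1, -14, 8, 2, -12, 12;
    -1, 0, 0, 0, 0, 0, 0;
    -2, 0, 29, -12, -6, 21, -26;
    -2, 0, 26, -11, -6, 17, -21;
    0, 0, 0, 0, 0, 0, 0;
    0, 0, 0, 0, 0, 0, 0;
    0, 0, 0, 0, 0, 0, 0;
    0, 0, 0, 0, 0, 0, 0;
    0, 0, 0, 0, 0, 0, 0;
    0, 0, 0, 0, 0, 0, 0;
    0, 0, 0, 0, 0, 0, 0;
    0, 0, 0, 0, 0, 0, 0;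
    -1, 0, 16, -7, -3, 11, -14;
    -2, 0, 50, -22, -10, 35, -43;
    -2, 0, 32, -14, -6, 22, -28;
    -2, 0, 57, -26, -10, 40, -50;
    -4, 0, 64, -28, -12, 44, -56;
    -3, 0, 48, -21, -9, 33, -42;
    -2, 0, 32, -14, -6, 22, -28;
    -1, 0, 16, -7, -3, 11, -14]
def Lmat : Matrix (Fin 15) (Fin 22) ℤ :=
  !![6, 6, 0, 0, 0, 0, 0, 0, 0, 1, 0, 0, 0, 0, 0, 6, -6, 0, 0, 0, 0, 0;
    0, 0, 0, 0, 0, 0, 0, 0, 0, 0, 0, 0, 0, 0, 0, -1, 1, 0, 0, 0, 0, 0;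
    0, 0, 0, 0, 0, 0, 0, 0, 0, 0, 0, 0, 0, 0, 0, 1, -1, 0, 0, 0, 1, 0;
    0, 0, 0, 0, 0, 0, 0, 0, 0, 0, 0, 0, 0, 0, 0, 0, 0, 0, 0, 0, 0, 1;
    0, 0, 0, 0, 0, 0, 0, 0, 0, 0, 0, 0, 0, 0, 0, 2, -2, 0, 0, 1, 0, 0;
    0, 0, 0, 0, 0, 0, 0, 0, 0, 0, 0, 0, 0, 0, 1, 1, -1, 0, 0, 0, 0, 0;
    3, 3, 0, 0, 0, 0, 0, 1, 0, 0, 0, 0, 0, 0, 0, 3, -3, 0, 0, 0, 0, 0;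
    2, 2, 0, 0, 0, 0, 1, 0, 0, 0, 0, 0, 0, 0, 0, 2, -2, 0, 0, 0, 0, 0;
    4, 4, 0, 0, 0, 0, 0, 0, 1, 0, 0, 0, 0, 0, 0, 4, -4, 0, 0, 0, 0, 0;
    5, 5, 0, 0, 0, 0, 0, 0, 0, 0, 1, 0, 0, 0, 0, 5, -5, 0, 0, 0, 0, 0;
    4, 4, 0, 0, 0, 0, 0, 0, 0, 0, 0, 1, 0, 0, 0, 4, -4, 0, 0, 0, 0, 0;
    3, 3, 0, 0, 0, 0, 0, 0, 0, 0, 0, 0, 1, 0, 0, 3, -3, 0, 0, 0, 0, 0;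
    2, 2, 0, 0, 0, 0, 0, 0, 0, 0, 0, 0, 0, 1, 0, 2, -2, 0, 0, 0, 0, 0;
    1, 1, 0, 0, 0, 0, 0, 0, 0, 0, 0, 0, 0, 0, 0, 1, -1, 0, 0, 0, 0, 0;
    0, 1, 0, 0, 0, 0, 0, 0, 0, 0, 0, 0, 0, 0, 0, 0, 0, 0, 0, 0, 0, 0]
def Rmat : Matrix (Fin 7) (Fin 22) ℤ :=
  !![0, 0, 0, 0, 0, 0, 0, 0, 0, 0, 0, 0, 0, 0, 0, 3, -2, 0, 0, 0, 0, 0;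
    0, 0, 0, 0, 0, 1, 0, 0, 0, 0, 0, 0, 0, 0, 0, 0, 0, 0, 0, 0, 0, 0;
    0, 0, 0, 0, 0, 0, 0, 0, 0, 0, 0, 0, 0, 0, 0, -2, 0, 1, 0, 0, 0, 0;
    0, 0, 0, 0, 0, 0, 0, 0, 0, 0, 0, 0, 0, 0, 0, 0, -1, 0, 1, 0, 0, 0;
    0, 0, 0, 0, 1, 0, 0, 0, 0, 0, 0, 0, 0, 0, 0, 0, 0, 0, 0, 0, 0, 0;
    0, 0, 1, 0, 0, 0, 0, 0, 0, 0, 0, 0, 0, 0, 0, 0, 0, 0, 0, 0, 0, 0;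
    0, 0, 0, 1, 0, 0, 0, 0, 0, 0, 0, 0, 0, 0, 0, 0, 0, 0, 0, 0, 0, 0]
def Cmat : Matrix (Fin 22) (Fin 7) ℤ :=
  !![0, 0, 0, 0, 0, 0, 0;
    0, 0, 0, 0, 0, 0, 0;
    0, 0, 0, 0, 0, 1, 0;
    0, 0, 0, 0, 0, 0, 1;
    0, 0, 0, 0, 1, 0, 0;
    0, 1, 0, 0, 0, 0, 0;
    0, 0, 0, 0, 0, 0, 0;
    0, 0, 0, 0, 0, 0, 0;
    0, 0, 0, 0, 0, 0, 0;
    0, 0, 0, 0, 0, 0, 0;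
    0, 0, 0, 0, 0, 0, 0;
    0, 0, 0, 0, 0, 0, 0;
    0, 0, 0, 0, 0, 0, 0;
    0, 0, 0, 0, 0, 0, 0;
    0, 0, 0, 0, 0, 0, 0;
    1, 0, 0, 0, 0, 0, 0;
    1, 0, 0, 0, 0, 0, 0;
    2, 0, 1, 0, 0, 0, 0;
    1, 0, 0, 1, 0, 0, 0;
    0, 0, 0, 0, 0, 0, 0;
    0, 0, 0, 0, 0, 0, 0;
    0, 0, 0, 0, 0, 0, 0]
def Smat : Matrix (Fin 7) (Fin 22) ℤ :=
  !![0, 0, 0, -1, 0, 0, 0, 0, 0, 0, 0, 0, 0, 0, 0, 0, 0, 0, 0, 0, 0, 0;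
    0, 0, -1, -1, -2, -2, 0, 0, 0, 0, 0, 0, 0, 0, 14, 2, 0, -4, 0, 0, 0, 0;
    0, 0, 0, -12, 20, 24, 0, 0, 0, 0, 0, 0, 0, 0, -58, -34, 0, 25, 0, 0, 0, 0;
    0, 0, 0, -12, 20, 23, 0, 0, 0, 0, 0, 0, 0, 0, -56, -33, 0, 24, 0, 0, 0, 0;
    0, 0, 0, -13, 23, 27, 0, 0, 0, 0, 0, 0, 0, 0, -67, -39, 0, 29, 0, 0, 0, 0;
    0, 0, 0, -4, 9, 10, 0, 0, 0, 0, 0, 0, 0, 0, -28, -14, 0, 11, 0, 0, 0, 0;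
    0, 0, 0, -8, 15, 18, 0, 0, 0, 0, 0, 0, 0, 0, -46, -25, 0, 19, 0, 0, 0, 0]
def Tmat : Matrix (Fin 22) (Fin 15) ℤ :=
  !![6, 0, 0, 0, 0, 0, 3, 2, 4, 5, 4, 3, 2, 1, 1;
    6, 0, 0, 0, 0, 0, 3, 2, 4, 5, 4, 3, 2, 1, 0;
    0, 0, 0, 0, 0, 0, 0, 0, 0, 0, 0, 0, 0, 0, 0;
    0, 0, 0, 0, 0, 0, 0, 0, 0, 0, 0, 0, 0, 0, 0;
    0, 0, 0, 0, 0, 0, 0, 0, 0, 0, 0, 0, 0, 0, 0;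
    0, 0, 0, 0, 0, 0, 0, 0, 0, 0, 0, 0, 0, 0, 0;
    -10, 0, 0, 0, 0, 0, -5, -4, -7, -8, -6, -4, -2, 0, 0;
    -15, 0, 0, 0, 0, 0, -8, -5, -10, -12, -9, -6, -3, 0, 0;
    -20, 0, 0, 0, 0, 0, -10, -7, -14, -16, -12, -8, -4, 0, 0;
    -30, 0, 0, 0, 0, 0, -15, -10, -20, -24, -18, -12, -6, 0, 0;
    -24, 0, 0, 0, 0, 0, -12, -8, -16, -20, -15, -10, -5, 0, 0;
    -18, 0, 0, 0, 0, 0, -9, -6, -12, -15, -12, -8, -4, 0, 0;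
    -12, 0, 0, 0, 0, 0, -6, -4, -8, -10, -8, -6, -3, 0, 0;
    -6, 0, 0, 0, 0, 0, -3, -2, -4, -5, -4, -3, -2, 0, 0;
    0, 0, 0, 0, 0, 0, 0, 0, 0, 0, 0, 0, 0, 0, 0;
    0, 0, 0, 0, 0, 0, 0, 0, 0, 0, 0, 0, 0, 0, 0;
    0, 0, 0, 0, 0, 1, 0, 0, 0, 0, 0, 0, 0, 0, 0;
    0, 0, 0, 0, 0, 0, 0, 0, 0, 0, 0, 0, 0, 0, 0;
    -24, 4, 2, 3, 1, 4, -12, -8, -16, -20, -16, -12, -8, -4, 0;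
    -18, 3, 1, 2, 0, 3, -9, -6, -12, -15, -12, -9, -6, -3, 0;
    -12, 2, 0, 1, 0, 2, -6, -4, -8, -10, -8, -6, -4, -2, 0;
    -6, 1, 0, 0, 0, 1, -3, -2, -4, -5, -4, -3, -2, -1, 0]
set_option maxRecDepth 100000
set_option maxHeartbeats 4000000

lemma hMA : Aembᵀ * GK3 * Aemb = M := by decide
lemma hLA : Lmat * Aemb = 1 := by decide
lemma hRA : Rmat * Aemb = 0 := by decide
lemma hALCR : Aemb * Lmat + Cmat * Rmat = 1 := by decide
lemma hBA_s15 : Bembᵀ * GK3 * Aemb = 0 := by decide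
lemma hBGB : Bembᵀ * GK3 * Bemb = UM' := by decide
lemma hSB : Smat * Bemb = 1 := by decide
lemma hBSTN : Bemb * Smat + Tmat * (Aembᵀ * GK3) = 1 := by decide
lemma hGsymm : GK3ᵀ = GK3 := by decide

lemma key {a b : ℕ} (X : Matrix (Fin 22) (Fin a) ℤ) (Y : Matrix (Fin 22) (Fin b) ℤ)
    (v : Fin a → ℤ) (w : Fin b → ℤ) :
    (X *ᵥ v) ⬝ᵥ (GK3 *ᵥ (Y *ᵥ w)) = v ⬝ᵥ ((Xᵀ * GK3 * Y) *ᵥ w) := by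
  rw [Matrix.mulVec_mulVec, Matrix.dotProduct_mulVec, ← Matrix.vecMul_transpose,
    Matrix.vecMul_vecMul, ← Matrix.dotProduct_mulVec, ← Matrix.mul_assoc]

lemma keyN (v : Fin 22 → ℤ) (x : Fin 15 → ℤ) :
    v ⬝ᵥ (GK3 *ᵥ (Aemb *ᵥ x)) = ((Aembᵀ * GK3) *ᵥ v) ⬝ᵥ x := by
  conv_rhs => rw [← Matrix.vecMul_transpose, Matrix.transpose_mul,
    Matrix.transpose_transpose, hGsymm]
  rw [Matrix.mulVec_mulVec, Matrix.dotProduct_mulVec]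

theorem stmt_15 :
    ∃ ι : (Fin 15 → ℤ) →ₗ[ℤ] (Fin 22 → ℤ),
      Function.Injective ι ∧
      (∀ x y : Fin 15 → ℤ, ι x ⬝ᵥ (GK3 *ᵥ ι y) = x ⬝ᵥ (M *ᵥ y)) ∧
      (∀ (v : Fin 22 → ℤ) (k : ℤ), k ≠ 0 → k • v ∈ LinearMap.range ι → v ∈ LinearMap.range ι) ∧
      ∃ j : (Fin 7 → ℤ) →ₗ[ℤ] (Fin 22 → ℤ),
        Function.Injective j ∧
        (∀ v : Fin 22 → ℤ, v ∈ LinearMap.range j ↔ ∀ x : Fin 15 → ℤ, v ⬝ᵥ (GK3 *ᵥ ι x) = 0) ∧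
        (∀ a b : Fin 7 → ℤ, j a ⬝ᵥ (GK3 *ᵥ j b) = a ⬝ᵥ (UM' *ᵥ b)) := by
  refine ⟨Aemb.mulVecLin, ?_, ?_, ?_, Bemb.mulVecLin, ?_, ?_, ?_⟩
  · intro x y h
    have h2 : Lmat *ᵥ (Aemb *ᵥ x) = Lmat *ᵥ (Aemb *ᵥ y) := by
      simpa using congrArg (Lmat *ᵥ ·) h
    rwa [Matrix.mulVec_mulVec, Matrix.mulVec_mulVec, hLA, Matrix.one_mulVec,
      Matrix.one_mulVec] at h2
  · intro x y
    simpa [Matrix.mulVecLin_apply, hMA] using key Aemb Aemb x y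
  · rintro v k hk ⟨x, hx⟩
    simp only [Matrix.mulVecLin_apply] at hx
    have hR : k • (Rmat *ᵥ v) = 0 := by
      rw [← Matrix.mulVec_smul, ← hx, Matrix.mulVec_mulVec, hRA, Matrix.zero_mulVec]
    have hRv : Rmat *ᵥ v = 0 := by
      rcases smul_eq_zero.mp hR with h | h
      · exact absurd h hk
      · exact h
    refine ⟨Lmat *ᵥ v, ?_⟩
    have h3 := congrArg (· *ᵥ v) hALCR
    simp only [Matrix.add_mulVec, Matrix.one_mulVec, ← Matrix.mulVec_mulVec, hRv,
      Matrix.mulVec_zero, add_zero] at h3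
    simpa [Matrix.mulVecLin_apply] using h3
  · intro x y h
    have h2 : Smat *ᵥ (Bemb *ᵥ x) = Smat *ᵥ (Bemb *ᵥ y) := by
      simpa using congrArg (Smat *ᵥ ·) h
    rwa [Matrix.mulVec_mulVec, Matrix.mulVec_mulVec, hSB, Matrix.one_mulVec,
      Matrix.one_mulVec] at h2
  · intro v
    constructor
    · rintro ⟨q, rfl⟩ x
      simp only [Matrix.mulVecLin_apply]
      rw [key Bemb Aemb q x, hBA_s15, Matrix.zero_mulVec, dotProduct_zero]
    · intro h
      have hNv : (Aembᵀ * GK3) *ᵥ v = 0 := by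
        have h1 := h ((Aembᵀ * GK3) *ᵥ v)
        rw [Matrix.mulVecLin_apply, keyN] at h1
        exact dotProduct_self_eq_zero.mp h1
      refine ⟨Smat *ᵥ v, ?_⟩
      have h3 := congrArg (· *ᵥ v) hBSTN
      simp only [Matrix.add_mulVec, Matrix.one_mulVec, ← Matrix.mulVec_mulVec, hNv,
        Matrix.mulVec_zero, add_zero] at h3
      simpa [Matrix.mulVecLin_apply] using h3
  · intro a b
    simpa [Matrix.mulVecLin_apply, hBGB] using key Bemb Bemb a b
end
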